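/- arXiv:2003.10098 — 9 statements merged into one kernel-verified Lean document; each statement's English description precedes it below -/
import Mathlib

section
/- A permutation σ of [n] avoids both 132 and 312 if and only if for every j > 1 there exists i < j with σ(i) = σ(j)+1 or σ(i) = σ(j)-1 (i.e., each new value is adjacent to a previously placed value). -/
/-- `σ` contains the pattern 132. -/
def Contains132 {n : ℕ} (σ : Equiv.Perm (Fin n)) : Prop :=
  ∃ a b c : Fin n, a < b ∧ b < c ∧ σ a < σ c ∧ σ c < σ b

/-- `σ` contains the pattern 312. -/
def Contains312 {n : ℕ} (σ : Equiv.Perm (Fin n)) : Prop :=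
  ∃ a b c : Fin n, a < b ∧ b < c ∧ σ b < σ c ∧ σ c < σ a

private lemma key_interval {n : ℕ} (σ : Equiv.Perm (Fin n))
    (H : ∀ j : Fin n, 0 < (j : ℕ) → ∃ i : Fin n, i < j ∧
        ((σ i : ℕ) = (σ j : ℕ) + 1 ∨ (σ i : ℕ) + 1 = (σ j : ℕ))) :
    ∀ m : ℕ, ∀ j a b v : Fin n, (j : ℕ) ≤ m → a ≤ j → b ≤ j →
      (σ a : ℕ) ≤ (v : ℕ) → (v : ℕ) ≤ (σ b : ℕ) → ∃ i, i ≤ j ∧ σ i = v := by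
  intro m
  induction m with
  | zero =>
    intro j a b v hj ha hb hav hvb
    have hj0 : (j : ℕ) = 0 := Nat.le_zero.mp hj
    have ha0 : a = j := Fin.ext (by have := Fin.le_def.mp ha; omega)
    have hb0 : b = j := Fin.ext (by have := Fin.le_def.mp hb; omega)
    rw [ha0] at hav; rw [hb0] at hvb
    exact ⟨j, le_refl _, Fin.ext (by omega)⟩
  | succ m ih =>
    intro j a b v hj ha hb hav hvb
    by_cases hjm : (j : ℕ) ≤ m
    · exact ih j a b v hjm ha hb hav hvb
    have hjm1 : (j : ℕ) = m + 1 := le_antisymm hj (Nat.not_le.mp hjm)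
    have hn := j.isLt
    obtain ⟨i0, hi0j, hi0⟩ := H j (by omega)
    have hi0m : (i0 : ℕ) ≤ m := by have := Fin.lt_def.mp hi0j; omega
    set j' : Fin n := ⟨m, by omega⟩ with hj'
    have hj'j : ∀ i : Fin n, i ≤ j' → i ≤ j := by
      intro i hi
      have := Fin.le_def.mp hi
      exact Fin.le_def.mpr (by simp only [hj'] at this; omega)
    rcases lt_trichotomy (v : ℕ) ((σ j : ℕ)) with hv | hv | hv
    · -- v < σ j : a ≠ j, replace b by i0
      have haj : (a : ℕ) ≤ m := by
        have h1 : (a : ℕ) ≤ m + 1 := hjm1 ▸ (Fin.le_def.mp ha)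
        rcases Nat.lt_or_ge (a : ℕ) (m + 1) with h | h
        · omega
        · exfalso
          have hEq : a = j := Fin.ext (by omega)
          rw [hEq] at hav; omega
      have hvb' : (v : ℕ) ≤ (σ i0 : ℕ) := by rcases hi0 with h | h <;> omega
      obtain ⟨i, hij, hiv⟩ := ih j' a i0 v (le_refl m)
        (Fin.le_def.mpr (by simpa [hj'] using haj))
        (Fin.le_def.mpr (by simpa [hj'] using hi0m)) hav hvb'
      exact ⟨i, hj'j i hij, hiv⟩
    · exact ⟨j, le_refl _, Fin.ext hv.symm⟩
    · -- v > σ j : b ≠ j, replace a by i0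
      have hbj : (b : ℕ) ≤ m := by
        have h1 : (b : ℕ) ≤ m + 1 := hjm1 ▸ (Fin.le_def.mp hb)
        rcases Nat.lt_or_ge (b : ℕ) (m + 1) with h | h
        · omega
        · exfalso
          have hEq : b = j := Fin.ext (by omega)
          rw [hEq] at hvb; omega
      have hav' : (σ i0 : ℕ) ≤ (v : ℕ) := by rcases hi0 with h | h <;> omega
      obtain ⟨i, hij, hiv⟩ := ih j' i0 b v (le_refl m)
        (Fin.le_def.mpr (by simpa [hj'] using hi0m))
        (Fin.le_def.mpr (by simpa [hj'] using hbj)) hav' hvb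
      exact ⟨i, hj'j i hij, hiv⟩

/-- A permutation of `[n]` avoids both 132 and 312 iff every value placed after the first
is adjacent (differs by one) to some previously placed value. -/
theorem avoids_132_312_iff (n : ℕ) (σ : Equiv.Perm (Fin n)) :
    (¬ Contains132 σ ∧ ¬ Contains312 σ) ↔
      ∀ j : Fin n, 0 < (j : ℕ) → ∃ i : Fin n, i < j ∧
        ((σ i : ℕ) = (σ j : ℕ) + 1 ∨ (σ i : ℕ) + 1 = (σ j : ℕ)) := by
  constructor
  · rintro ⟨h132, h312⟩ j hj
    by_contra hcon
    push_neg at hcon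
    by_cases hex : ∃ a : Fin n, a < j ∧ (σ a : ℕ) < (σ j : ℕ)
    · -- some earlier value below σ j ⇒ σ j - 1 sits later ⇒ 132
      obtain ⟨a, haj, hav⟩ := hex
      have h1 : 0 < (σ j : ℕ) := by omega
      set w : Fin n := ⟨(σ j : ℕ) - 1, by have := (σ j).isLt; omega⟩ with hw
      set c := σ.symm w with hcdef
      have hσc : σ c = w := σ.apply_symm_apply w
      have hcw : (σ c : ℕ) = (σ j : ℕ) - 1 := by rw [hσc]
      have hcj : j < c := by
        rcases lt_trichotomy c j with h | h | h
        · exfalso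
          have := (hcon c h).2
          omega
        · exfalso; rw [h] at hcw; omega
        · exact h
      have hane : a ≠ c := ne_of_lt (lt_trans haj hcj)
      have hσane : (σ a : ℕ) ≠ (σ c : ℕ) := fun h =>
        hane (σ.injective (Fin.ext h))
      exact h132 ⟨a, j, c, haj, hcj,
        Fin.lt_def.mpr (by omega), Fin.lt_def.mpr (by omega)⟩
    · -- all earlier values above σ j ⇒ σ j + 1 sits later ⇒ 312
      push_neg at hex
      have hn0 : 0 < n := lt_of_le_of_lt (Nat.zero_le _) j.isLt
      set a0 : Fin n := ⟨0, hn0⟩ with ha0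
      have ha0j : a0 < j := Fin.lt_def.mpr (by simpa [ha0] using hj)
      have hσa0 : (σ j : ℕ) < (σ a0 : ℕ) := by
        have h1 : ¬ (σ a0 : ℕ) < (σ j : ℕ) := not_lt.mpr (hex a0 ha0j)
        have h2 : (σ a0 : ℕ) ≠ (σ j : ℕ) := fun h =>
          (ne_of_lt ha0j) (σ.injective (Fin.ext h))
        omega
      have h2 : (σ j : ℕ) + 1 < n := lt_of_le_of_lt hσa0 (σ a0).isLt
      set w : Fin n := ⟨(σ j : ℕ) + 1, h2⟩ with hw
      set c := σ.symm w with hcdef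
      have hσc : σ c = w := σ.apply_symm_apply w
      have hcw : (σ c : ℕ) = (σ j : ℕ) + 1 := by rw [hσc]
      have hcj : j < c := by
        rcases lt_trichotomy c j with h | h | h
        · exfalso
          have := (hcon c h).1
          omega
        · exfalso; rw [h] at hcw; omega
        · exact h
      have hane : a0 ≠ c := ne_of_lt (lt_trans ha0j hcj)
      have hσane : (σ a0 : ℕ) ≠ (σ c : ℕ) := fun h =>
        hane (σ.injective (Fin.ext h))
      exact h312 ⟨a0, j, c, ha0j, hcj,
        Fin.lt_def.mpr (by omega), Fin.lt_def.mpr (by omega)⟩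
  · intro H
    constructor
    · rintro ⟨a, b, c, hab, hbc, hac, hcb⟩
      obtain ⟨i, hib, hiv⟩ := key_interval σ H n b a b (σ c)
        (le_of_lt b.isLt) (le_of_lt hab) (le_refl b)
        (le_of_lt (Fin.lt_def.mp hac)) (le_of_lt (Fin.lt_def.mp hcb))
      have : i = c := σ.injective hiv
      subst this
      exact absurd hib (not_le.mpr hbc)
    · rintro ⟨a, b, c, hab, hbc, hbcv, hca⟩
      obtain ⟨i, hib, hiv⟩ := key_interval σ H n b b a (σ c)
        (le_of_lt b.isLt) (le_refl b) (le_of_lt hab)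
        (le_of_lt (Fin.lt_def.mp hbcv)) (le_of_lt (Fin.lt_def.mp hca))
      have : i = c := σ.injective hiv
      subst this
      exact absurd hib (not_le.mpr hbc)
end

section
/- For every n ≥ 1, the sum over r from 1 to n of r! times the signless Stirling number of the first kind s(n,r) equals the permanent of the n×n matrix M with M(i,i) = i and M(i,j) = 1 for i ≠ j. -/
/-!
Expanding `∏ i, (1 + i·[σ i = i])` over the sets `S` of fixed points of `σ` and counting the
`(n - |S|)!` permutations that fix `S` pointwise turns the permanent into
`∑_S (n - |S|)! ∏_{i ∈ S} i`. On the other side `s(n, r)` is the coefficient of `X ^ r` in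
`X (X + 1) ⋯ (X + n - 1)`, and expanding that product over subsets gives the same sum,
with `r = n - |S|`.
-/

/-- The signless Stirling numbers of the first kind. -/
def stirling1 : ℕ → ℕ → ℕ
  | 0, 0 => 1
  | 0, _ + 1 => 0
  | _ + 1, 0 => 0
  | n + 1, r + 1 => n * stirling1 n (r + 1) + stirling1 n r

open Finset Polynomial Equiv
open scoped Nat

theorem stirling1_eq_coeff_prod_X_add_C (n r : ℕ) :
    stirling1 n r = (∏ j ∈ range n, (X + C j : ℕ[X])).coeff r := by
  induction n generalizing r with
  | zero => cases r <;> simp [stirling1, coeff_one]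
  | succ n ih =>
    rw [prod_range_succ, mul_add, coeff_add, coeff_mul_C, ← ih]
    cases r with
    | zero => cases n <;> simp [stirling1]
    | succ r => rw [coeff_mul_X, ← ih, stirling1]; ring

theorem sum_mul_coeff_prod_X_add_C {R ι : Type*} [CommSemiring R] (s : Finset ι) (f : ι → R)
    (g : ℕ → R) :
    ∑ r ∈ range (#s + 1), g r * (∏ i ∈ s, (X + C (f i))).coeff r =
      ∑ t ∈ s.powerset, g (#s - #t) * ∏ i ∈ t, f i := by
  classical
  have hexpand :
      ∏ i ∈ s, (X + C (f i)) = ∑ t ∈ s.powerset, C (∏ i ∈ t, f i) * X ^ (#s - #t) := by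
    simp_rw [add_comm X, prod_add, prod_const, ← map_prod, card_sdiff]
    refine sum_congr rfl fun t ht => ?_
    rw [inter_eq_left.2 (mem_powerset.1 ht)]
  simp_rw [hexpand, finsetSum_coeff, coeff_C_mul_X_pow, mul_sum]
  rw [sum_comm]
  refine sum_congr rfl fun t _ => ?_
  simp [mul_comm]

theorem card_perm_fixing_pointwise {α : Type*} [Fintype α] [DecidableEq α] (S : Finset α) :
    #{σ : Perm α | ∀ a ∈ S, σ a = a} = (Fintype.card α - #S)! := by
  rw [← Fintype.card_subtype, ← Fintype.card_coe S, ← Fintype.card_subtype_compl,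
    ← Fintype.card_perm]
  refine Fintype.card_congr <|
    (subtypeEquivRight fun σ => ?_).trans (Perm.subtypeEquivSubtypePerm (· ∉ S)).symm
  simp

theorem prod_ite_fixed_add_one {R α : Type*} [CommSemiring R] [Fintype α] [DecidableEq α]
    (σ : Perm α) (f : α → R) :
    ∏ i, (if σ i = i then f i + 1 else 1) = ∑ S with ∀ a ∈ S, σ a = a, ∏ i ∈ S, f i := by
  rw [← prod_filter, prod_add_one]
  congr 1
  ext S
  simp [subset_iff]

theorem sum_perm_prod_ite_fixed_add_one {R α : Type*} [CommSemiring R] [Fintype α]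
    [DecidableEq α] (f : α → R) :
    ∑ σ : Perm α, ∏ i, (if σ i = i then f i + 1 else 1) =
      ∑ S : Finset α, ((Fintype.card α - #S)! : R) * ∏ i ∈ S, f i := by
  simp_rw [prod_ite_fixed_add_one, sum_filter]
  rw [sum_comm]
  refine sum_congr rfl fun S _ => ?_
  rw [← sum_filter, sum_const, card_perm_fixing_pointwise, nsmul_eq_mul]

/-- `Σ_{r=1}^n r! · s(n,r)` equals the permanent of the `n × n` matrix with diagonal
entries `1, 2, …, n` and all off-diagonal entries `1`. -/
theorem sum_factorial_stirling1_eq_permanent (n : ℕ) (hn : 1 ≤ n) :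
    ∑ r ∈ Finset.Icc 1 n, r.factorial * stirling1 n r =
      ∑ σ : Equiv.Perm (Fin n), ∏ i : Fin n,
        (if σ i = i then (i : ℕ) + 1 else 1) := by
  calc ∑ r ∈ Icc 1 n, r ! * stirling1 n r
      = ∑ r ∈ range (n + 1), r ! * (∏ i : Fin n, (X + C (i : ℕ))).coeff r := by
        obtain ⟨m, rfl⟩ := Nat.exists_eq_add_of_le' hn
        rw [range_eq_Ico, sum_eq_sum_Ico_succ_bot (by omega), Ico_add_one_right_eq_Icc,
          Fin.prod_univ_eq_prod_range (fun i => X + C i)]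
        simp only [← stirling1_eq_coeff_prod_X_add_C]
        simp [stirling1]
    _ = ∑ S : Finset (Fin n), (n - #S)! * ∏ i ∈ S, (i : ℕ) := by
        simpa using sum_mul_coeff_prod_X_add_C univ (fun i : Fin n => (i : ℕ)) (fun r => r !)
    _ = ∑ σ : Perm (Fin n), ∏ i : Fin n, (if σ i = i then (i : ℕ) + 1 else 1) := by
        simpa using (sum_perm_prod_ite_fixed_add_one (fun i : Fin n => (i : ℕ))).symm
end

section
/- Define polynomials a_n(x) by a_0(x) = 1, a_1(x) = x, and a_n(x) = (n-1)·a_{n-1}(x) + x·a_{n-1}(x+1) for n ≥ 2. Then for all n ≥ 1, a_n(x) = Σ_{r=1}^n s(n,r) · x(x+1)···(x+r-1), where s(n,r) is the signless Stirling number of the first kind. -/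
/-- The polynomials `a_n(x)` defined by `a_0(x) = 1`, `a_1(x) = x` and
`a_n(x) = (n-1)·a_{n-1}(x) + x·a_{n-1}(x+1)`. -/
def aPoly : ℕ → ℚ → ℚ
  | 0, _ => 1
  | 1, x => x
  | n + 2, x => (n + 1) * aPoly (n + 1) x + x * aPoly (n + 1) (x + 1)


/-!
Put `S_n(x) = Σ_{r=0}^n s(n,r) · x(x+1)⋯(x+r-1)`. The Stirling recurrence
`s(n+1,r+1) = n·s(n,r+1) + s(n,r)` together with `x(x+1)⋯(x+r) = x · (x+1)(x+2)⋯(x+r)` gives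
`S_{n+1}(x) = n·S_n(x) + x·S_n(x+1)`, the recurrence of `a_n`. Keeping the term `r = 0` makes
`S_0 = 1 = a_0`, so the recurrence holds from `n = 0` on, and for `n ≥ 1` that term vanishes.
-/

open Finset Nat Polynomial

theorem stirling1_eq_stirlingFirst : stirling1 = stirlingFirst := by
  funext n r
  induction n generalizing r with
  | zero => cases r <;> rfl
  | succ n ih => cases r <;> simp [stirling1, stirlingFirst, ih]

lemma ascPochhammer_eval_eq_prod_range {R : Type*} [CommSemiring R] (n : ℕ) (x : R) :
    (ascPochhammer R n).eval x = ∏ k ∈ range n, (x + k) := by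
  induction n with
  | zero => simp
  | succ n ih => rw [ascPochhammer_succ_eval, ih, prod_range_succ]

section

variable {R : Type*} [CommSemiring R]

noncomputable def stirlingFirstAscSum (n : ℕ) (x : R) : R :=
  ∑ r ∈ range (n + 1), (stirlingFirst n r : R) * (ascPochhammer R r).eval x

lemma stirlingFirstAscSum_succ (n : ℕ) (x : R) :
    stirlingFirstAscSum (n + 1) x =
      n * stirlingFirstAscSum n x + x * stirlingFirstAscSum n (x + 1) := by
  have eval_succ (r : ℕ) :
      (ascPochhammer R (r + 1)).eval x = x * (ascPochhammer R r).eval (x + 1) := by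
    simp [ascPochhammer_succ_left]
  have mul_sum_shift : (n : R) * stirlingFirstAscSum n x =
      n * ∑ r ∈ range (n + 1), (stirlingFirst n (r + 1) : R) * (ascPochhammer R (r + 1)).eval x := by
    rw [stirlingFirstAscSum, sum_range_succ', sum_range_succ,
      stirlingFirst_eq_zero_of_lt (lt_add_one n)]
    cases n <;> simp
  calc stirlingFirstAscSum (n + 1) x
      = ∑ r ∈ range (n + 1),
          (stirlingFirst (n + 1) (r + 1) : R) * (ascPochhammer R (r + 1)).eval x := by
        simp [stirlingFirstAscSum, sum_range_succ' _ (n + 1)]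
    _ = ∑ r ∈ range (n + 1),
          (n * ((stirlingFirst n (r + 1) : R) * (ascPochhammer R (r + 1)).eval x)
            + x * ((stirlingFirst n r : R) * (ascPochhammer R r).eval (x + 1))) := by
        refine sum_congr rfl fun r _ => ?_
        rw [stirlingFirst_succ_succ, eval_succ]
        push_cast
        ring
    _ = n * stirlingFirstAscSum n x + x * stirlingFirstAscSum n (x + 1) := by
        rw [sum_add_distrib, ← mul_sum, ← mul_sum, mul_sum_shift, stirlingFirstAscSum]

end

lemma aPoly_eq_stirlingFirstAscSum : ∀ (n : ℕ) (x : ℚ), aPoly n x = stirlingFirstAscSum n x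
  | 0, x => by simp [aPoly, stirlingFirstAscSum]
  | 1, x => by simp [aPoly, stirlingFirstAscSum, sum_range_succ, stirlingFirst_self]
  | n + 2, x => by
    rw [aPoly, stirlingFirstAscSum_succ (n + 1), aPoly_eq_stirlingFirstAscSum (n + 1),
      aPoly_eq_stirlingFirstAscSum (n + 1)]
    push_cast
    ring

/-- `a_n(x) = Σ_{r=1}^n s(n,r) · x(x+1)⋯(x+r-1)` for `n ≥ 1`. -/
theorem aPoly_eq_sum_stirling1_risingFactorial (n : ℕ) (hn : 1 ≤ n) (x : ℚ) :
    aPoly n x = ∑ r ∈ Finset.Icc 1 n,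
      (stirling1 n r : ℚ) * ∏ k ∈ Finset.range r, (x + k) := by
  obtain ⟨m, rfl⟩ := Nat.exists_eq_add_of_le' hn
  rw [aPoly_eq_stirlingFirstAscSum, stirlingFirstAscSum, range_eq_Ico,
    sum_eq_sum_Ico_succ_bot (by omega), Ico_add_one_right_eq_Icc, stirling1_eq_stirlingFirst]
  simp [ascPochhammer_eval_eq_prod_range]
end

section
/- Define a_n by a_0 = 1, and a_n determined from the polynomial recurrence a_n(x) = (n-1)·a_{n-1}(x) + x·a_{n-1}(x+1) evaluated at x = 1. Then a_n = Σ_{r=1}^n r! · s(n,r) for all n ≥ 1. -/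
/-- The rising factorial `x^{(r)} = x (x+1) ⋯ (x+r-1)`, written so that
`x^{(r+1)} = x · (x+1)^{(r)}`. -/
def ris : ℚ → ℕ → ℚ
  | _, 0 => 1
  | x, r + 1 => x * ris (x + 1) r

lemma ris_succ' : ∀ (r : ℕ) (x : ℚ), ris x (r + 1) = (x + r) * ris x r := by
  intro r
  induction r with
  | zero => intro x; simp [ris]
  | succ k ih =>
    intro x
    rw [show ris x (k + 1 + 1) = x * ris (x + 1) (k + 1) from rfl, ih (x + 1),
      show ris x (k + 1) = x * ris (x + 1) k from rfl]
    push_cast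
    ring

lemma ris_one (r : ℕ) : ris 1 r = r.factorial := by
  induction r with
  | zero => simp [ris]
  | succ k ih =>
    rw [ris_succ', ih, Nat.factorial_succ]
    push_cast
    ring

lemma stirling1_eq_zero : ∀ n r : ℕ, n < r → stirling1 n r = 0 := by
  intro n
  induction n with
  | zero => intro r h; cases r with
    | zero => omega
    | succ k => rfl
  | succ m ih =>
    intro r h
    cases r with
    | zero => omega
    | succ k =>
      show m * stirling1 m (k + 1) + stirling1 m k = 0
      rw [ih (k + 1) (by omega), ih k (by omega)]
      ring

lemma stirling1_zero (n : ℕ) : stirling1 (n + 1) 0 = 0 := rfl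

lemma key : ∀ (n : ℕ) (x : ℚ),
    aPoly n x = ∑ r ∈ Finset.range (n + 1), (stirling1 n r : ℚ) * ris x r := by
  intro n
  induction n with
  | zero => intro x; simp [aPoly, stirling1, ris]
  | succ m ih =>
    intro x
    cases m with
    | zero =>
      show x = _
      rw [Finset.sum_range_succ, Finset.sum_range_one]
      show x = (stirling1 1 0 : ℚ) * 1 + (stirling1 1 1 : ℚ) * (x * ris (x + 1) 0)
      show x = ((0 : ℕ) : ℚ) * 1 + ((1 : ℕ) : ℚ) * (x * 1)
      push_cast; ring
    | succ k =>
      show (k + 1 : ℚ) * aPoly (k + 1) x + x * aPoly (k + 1) (x + 1) = _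
      rw [ih x, ih (x + 1)]
      -- RHS: shift index, drop the r = 0 term
      rw [Finset.sum_range_succ' _ (k + 2)]
      have h0 : (stirling1 (k + 2) 0 : ℚ) * ris x 0 = 0 := by
        rw [stirling1_zero]; simp
      rw [h0, add_zero]
      have hrec : ∀ r ∈ Finset.range (k + 2),
          (stirling1 (k + 2) (r + 1) : ℚ) * ris x (r + 1) =
          (k + 1 : ℚ) * ((stirling1 (k + 1) (r + 1) : ℚ) * ris x (r + 1)) +
          x * ((stirling1 (k + 1) r : ℚ) * ris (x + 1) r) := by
        intro r _
        show (((k + 1) * stirling1 (k + 1) (r + 1) + stirling1 (k + 1) r : ℕ) : ℚ)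
            * ris x (r + 1) = _
        have : ris x (r + 1) = x * ris (x + 1) r := rfl
        rw [this]
        push_cast
        ring
      rw [Finset.sum_congr rfl hrec, Finset.sum_add_distrib, ← Finset.mul_sum,
        ← Finset.mul_sum]
      congr 1
      · congr 1
        have h1 : ∑ i ∈ Finset.range (k + 2),
            (stirling1 (k + 1) (i + 1) : ℚ) * ris x (i + 1) =
            ∑ r ∈ Finset.range (k + 3), (stirling1 (k + 1) r : ℚ) * ris x r := by
          rw [Finset.sum_range_succ' (fun r => (stirling1 (k + 1) r : ℚ) * ris x r) (k + 2)]
          rw [stirling1_zero k]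
          simp
        rw [h1, Finset.sum_range_succ _ (k + 2),
          stirling1_eq_zero (k + 1) (k + 2) (by omega)]
        simp

/-- `a_n = a_n(1) = Σ_{r=1}^n r! · s(n,r)` for `n ≥ 1`. -/
theorem aPoly_one_eq_sum_factorial_stirling1 (n : ℕ) (hn : 1 ≤ n) :
    aPoly n 1 = ∑ r ∈ Finset.Icc 1 n, (r.factorial * stirling1 n r : ℚ) := by
  rw [key n 1]
  rw [show Finset.range (n + 1) = Finset.Icc 0 n by
    rw [Finset.range_eq_Ico]; rfl]
  rw [← Finset.sum_subset (Finset.Icc_subset_Icc_left (by omega : 0 ≤ 1))]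
  · exact Finset.sum_congr rfl fun r _ => by rw [ris_one]; ring
  · intro r hr hnr
    have : r = 0 := by
      simp only [Finset.mem_Icc] at hr hnr; omega
    subst this
    obtain ⟨m, rfl⟩ := Nat.exists_eq_add_of_le hn
    rw [show 1 + m = m + 1 by omega, stirling1_zero]
    simp
end

section
/- For n ≥ 2, the alternating sum Σ_{i≥1} (-1)^{i+1} Σ_{0=j_0 < j_1 < ... < j_i < n} 1/(j_2·j_3···j_i) equals n/2, where the inner sum is over all strictly increasing integer sequences 0 = j_0 < j_1 < ... < j_i < n, and the product over q from 2 to i is taken to be 1 when i = 1. -/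
/-!
The summand `w A = (-1)^(|A|+1) / ∏ (A \ {min A})` takes the value `-1` at `∅`, so the sum over
nonempty subsets of `s` is `T s = ∑_{A ⊆ s} w A + 1`. If `a` exceeds every element of `s`, then
`w (insert a A) = -w A / a` for nonempty `A` and `w {a} = 1`, which gives the recursion
`T (insert a s) = (1 - 1/a) T s + 1`. Along `s = {1, …, m}` it is solved by `T = (m + 1)/2`.
-/

open Finset

variable {K : Type*} [Field K]

variable (K) in
def chainWeight (A : Finset ℕ) : K :=
  (-1 : K) ^ (#A + 1) * (1 / ∏ j ∈ A.erase (WithTop.untopD 0 A.min), (j : K))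

@[simp]
lemma chainWeight_empty : chainWeight K ∅ = -1 := by
  simp [chainWeight]

lemma untopD_min_eq_min' {α : Type*} [LinearOrder α] {s : Finset α} (hs : s.Nonempty) (d : α) :
    WithTop.untopD d s.min = s.min' hs := by
  rw [← coe_min' hs]
  rfl

@[simp]
lemma chainWeight_singleton (a : ℕ) : chainWeight K {a} = 1 := by
  rw [chainWeight, untopD_min_eq_min' (singleton_nonempty a) 0, min'_singleton]
  simp

lemma chainWeight_insert_of_forall_lt {A : Finset ℕ} (hA : A.Nonempty) {a : ℕ}
    (ha : ∀ x ∈ A, x < a) :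
    chainWeight K (insert a A) = -chainWeight K A / a := by
  have haA : a ∉ A := fun h => (ha a h).false
  have hmin_lt : A.min' hA < a := ha _ (A.min'_mem hA)
  have hmin : (insert a A).min' (insert_nonempty a A) = A.min' hA := by
    rw [min'_insert a A hA, min_eq_right hmin_lt.le]
  have ha_erase : a ∉ A.erase (A.min' hA) := fun h => haA (mem_of_mem_erase h)
  rw [chainWeight, chainWeight, untopD_min_eq_min' (insert_nonempty a A),
    untopD_min_eq_min' hA, hmin, erase_insert_of_ne hmin_lt.ne', prod_insert ha_erase,
    card_insert_of_notMem haA]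
  field_simp
  ring

theorem sum_powerset_insert_chainWeight {s : Finset ℕ} {a : ℕ} (hs : ∀ x ∈ s, x < a) :
    ∑ A ∈ (insert a s).powerset, chainWeight K A + 1 =
      (1 - 1 / a) * (∑ A ∈ s.powerset, chainWeight K A + 1) + 1 := by
  have has : a ∉ s := fun h => (hs a h).false
  have hinsert : ∑ A ∈ s.powerset, chainWeight K (insert a A) =
      1 - (∑ A ∈ s.powerset, chainWeight K A + 1) / a := by
    rw [← add_sum_erase _ _ (empty_mem_powerset s), insert_empty, chainWeight_singleton,
      sum_congr rfl fun A hA => chainWeight_insert_of_forall_lt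
        (nonempty_iff_ne_empty.2 (ne_of_mem_erase hA))
        fun x hx => hs x (mem_powerset.1 (mem_of_mem_erase hA) hx),
      ← sum_div, sum_neg_distrib, sum_erase_eq_sub (empty_mem_powerset s), chainWeight_empty]
    ring
  rw [sum_powerset_insert has, hinsert]
  ring

theorem sum_powerset_Icc_chainWeight [CharZero K] (m : ℕ) :
    ∑ A ∈ (Icc 1 (m + 1)).powerset, chainWeight K A + 1 = (m + 2) / 2 := by
  have hstep (m : ℕ) : ∑ A ∈ (Icc 1 (m + 1)).powerset, chainWeight K A + 1 =
      (1 - 1 / (m + 1 : ℕ)) * (∑ A ∈ (Icc 1 m).powerset, chainWeight K A + 1) + 1 := by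
    rw [← insert_Icc_right_eq_Icc_add_one (Nat.le_add_left 1 m)]
    exact sum_powerset_insert_chainWeight fun x hx => Nat.lt_succ_of_le (mem_Icc.1 hx).2
  induction m with
  | zero => rw [hstep 0]; norm_num
  | succ m ih =>
    have hm : (m + 1 + 1 : K) ≠ 0 := by exact_mod_cast (m + 1).succ_ne_zero
    rw [hstep, ih]
    push_cast
    field_simp
    ring

/-- A chain `0 = j_0 < j_1 < ⋯ < j_i < n` is encoded by the nonempty set
`A = {j_1, …, j_i} ⊆ {1, …, n-1}`; then `i = #A` and `j_2 ⋯ j_i` is the product over `A`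
minus its minimum. -/
theorem alternating_chain_sum_eq_half (n : ℕ) (hn : 2 ≤ n) :
    ∑ A ∈ (Finset.Icc 1 (n - 1)).powerset.filter (fun A => A ≠ ∅),
      (-1 : ℚ) ^ (A.card + 1) * (1 / ∏ j ∈ A.erase (WithTop.untopD 0 A.min), (j : ℚ)) =
      (n : ℚ) / 2 := by
  obtain ⟨m, rfl⟩ : ∃ m, n = m + 2 := ⟨n - 2, by omega⟩
  have hsum := sum_powerset_Icc_chainWeight (K := ℚ) m
  change ∑ A ∈ _, chainWeight ℚ A = _
  rw [filter_ne', sum_erase_eq_sub (empty_mem_powerset _), chainWeight_empty]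
  push_cast
  linarith
end

section
/- For each s with 1 ≤ s ≤ n-1, the number of sequences (p_1,...,p_n) ∈ ℕ^n satisfying p_t ≤ t for all t < s, p_s = s, p_j < j for all j > s, and p_j = 0 for at least one j > s, equals (n-s)·(n-1)!. -/
/-!
Without the zero condition the sequences form a box `∏ₜ Aₜ`, where `|Aₜ| = t + 1` for `t < s`,
`|Aₛ| = 1` and `|Aⱼ| = j` for `j > s`, so there are `n!` of them. Those with no zero after
position `s` form the sub-box in which each `Aⱼ`, `j > s`, loses the value `0`; it has
`s! · s(s+1)⋯(n-1) = s · (n-1)!` elements. The count is the difference `(n - s) · (n-1)!`.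
-/

open Finset Nat

/-- The box factor `A_{i+1}` of the header: `i` is 0-based, `s` is 1-based. -/
def allowedValues (s i : ℕ) : Finset ℕ :=
  if i + 1 < s then range (i + 2) else if i + 1 = s then {s} else range (i + 1)

section allowedValues

variable {s i : ℕ}

lemma mem_allowedValues {x : ℕ} :
    x ∈ allowedValues s i ↔
      (i + 1 < s → x ≤ i + 1) ∧ (i + 1 = s → x = s) ∧ (s < i + 1 → x < i + 1) := by
  unfold allowedValues
  split_ifs <;> simp only [mem_range, mem_singleton] <;> omega

lemma card_allowedValues_of_lt (h : i + 1 < s) : #(allowedValues s i) = i + 2 := by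
  simp [allowedValues, h]

lemma card_allowedValues_of_gt (h : s < i + 1) : #(allowedValues s i) = i + 1 := by
  simp [allowedValues, h.not_gt, h.ne']

lemma card_filter_allowedValues_of_gt (h : s < i + 1) :
    #{x ∈ allowedValues s i | s < i + 1 → x ≠ 0} = i := by
  simp [allowedValues, h, h.not_gt, h.ne', filter_ne']

lemma filter_allowedValues_of_le (h : i + 1 ≤ s) :
    {x ∈ allowedValues s i | s < i + 1 → x ≠ 0} = allowedValues s i :=
  filter_true_of_mem fun _ _ hs => absurd hs h.not_gt

lemma prod_range_card_allowedValues_self (s : ℕ) :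
    ∏ i ∈ range s, #(allowedValues s i) = s ! := by
  cases s with
  | zero => rfl
  | succ t =>
    rw [prod_range_succ, prod_congr rfl fun i hi => card_allowedValues_of_lt (by simpa using hi)]
    simp [allowedValues, ← prod_range_add_one_eq_factorial (t + 1), prod_range_succ']

lemma prod_range_card_allowedValues {n : ℕ} (hsn : s ≤ n) :
    ∏ i ∈ range n, #(allowedValues s i) = n ! := by
  induction n, hsn using Nat.le_induction with
  | base => exact prod_range_card_allowedValues_self s
  | succ n hsn ih =>
    rw [prod_range_succ, ih, card_allowedValues_of_gt (by omega), factorial_succ, mul_comm]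

lemma prod_range_card_filter_allowedValues {n : ℕ} (hsn : s < n) :
    ∏ i ∈ range n, #{x ∈ allowedValues s i | s < i + 1 → x ≠ 0} = s * (n - 1)! := by
  induction n, hsn using Nat.le_induction with
  | base =>
    rw [prod_range_succ, card_filter_allowedValues_of_gt (by omega),
      prod_congr rfl fun i hi => by rw [filter_allowedValues_of_le (by rw [mem_range] at hi; omega)],
      prod_range_card_allowedValues_self, mul_comm, succ_sub_one]
  | succ n hsn ih =>
    rw [prod_range_succ, ih, card_filter_allowedValues_of_gt (by omega), mul_assoc, mul_comm _ n,
      mul_factorial_pred (by omega), Nat.add_sub_cancel]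

lemma prod_range_card_allowedValues_sub_prod_card_filter (n s : ℕ) :
    ∏ i ∈ range n, #(allowedValues s i) -
        ∏ i ∈ range n, #{x ∈ allowedValues s i | s < i + 1 → x ≠ 0} =
      (n - s) * (n - 1)! := by
  rcases le_or_gt n s with hns | hsn
  · have hfilter : ∏ i ∈ range n, #{x ∈ allowedValues s i | s < i + 1 → x ≠ 0} =
        ∏ i ∈ range n, #(allowedValues s i) :=
      prod_congr rfl fun i hi => by rw [filter_allowedValues_of_le (by rw [mem_range] at hi; omega)]
    rw [hfilter, Nat.sub_self, Nat.sub_eq_zero_of_le hns, zero_mul]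
  · rw [prod_range_card_allowedValues hsn.le, prod_range_card_filter_allowedValues hsn,
      ← mul_factorial_pred (by omega : n ≠ 0), Nat.sub_mul]

end allowedValues

theorem card_seq_with_fixed_s_general (n s : ℕ) :
    Set.ncard {p : Fin n → ℕ |
      (∀ i : Fin n, (i : ℕ) + 1 < s → p i ≤ (i : ℕ) + 1) ∧
      (∀ i : Fin n, (i : ℕ) + 1 = s → p i = s) ∧
      (∀ i : Fin n, s < (i : ℕ) + 1 → p i < (i : ℕ) + 1) ∧
      (∃ i : Fin n, s < (i : ℕ) + 1 ∧ p i = 0)} =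
    (n - s) * (n - 1).factorial := by
  set A := Fintype.piFinset fun i : Fin n => allowedValues s i
  set B := Fintype.piFinset fun i : Fin n => {x ∈ allowedValues s i | s < i + 1 → x ≠ 0}
  have hBA : B ⊆ A := Fintype.piFinset_subset _ _ fun _ => filter_subset _ _
  calc _ = #(A \ B) := by
        rw [← Set.ncard_coe_finset]
        congr 1
        ext p
        simp only [Set.mem_ofPred_eq, coe_sdiff, Set.mem_sdiff, mem_coe, Fintype.mem_piFinset,
          A, B, mem_filter, mem_allowedValues, forall_and, not_and, not_forall, not_not, exists_prop]
        tauto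
    _ = ∏ i ∈ range n, #(allowedValues s i) -
          ∏ i ∈ range n, #{x ∈ allowedValues s i | s < i + 1 → x ≠ 0} := by
        rw [card_sdiff_of_subset hBA, Fintype.card_piFinset, Fintype.card_piFinset,
          Fin.prod_univ_eq_prod_range (fun i => #(allowedValues s i)),
          Fin.prod_univ_eq_prod_range (fun i => #{x ∈ allowedValues s i | s < i + 1 → x ≠ 0})]
    _ = (n - s) * (n - 1)! := prod_range_card_allowedValues_sub_prod_card_filter n s

/-- For `1 ≤ s ≤ n-1`, the number of sequences `(p_1, …, p_n) ∈ ℕ^n` with `p_t ≤ t` for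
`t < s`, `p_s = s`, `p_j < j` for `j > s`, and `p_j = 0` for at least one `j > s`,
equals `(n-s)·(n-1)!` (1-based indexing: the 0-based index `i` is the 1-based `i+1`). -/
theorem card_seq_with_fixed_s (n s : ℕ) (hs1 : 1 ≤ s) (hs2 : s ≤ n - 1) :
    Set.ncard {p : Fin n → ℕ |
      (∀ i : Fin n, (i : ℕ) + 1 < s → p i ≤ (i : ℕ) + 1) ∧
      (∀ i : Fin n, (i : ℕ) + 1 = s → p i = s) ∧
      (∀ i : Fin n, s < (i : ℕ) + 1 → p i < (i : ℕ) + 1) ∧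
      (∃ i : Fin n, s < (i : ℕ) + 1 ∧ p i = 0)} =
    (n - s) * (n - 1).factorial :=
  card_seq_with_fixed_s_general n s
end

section
/- Let PF-hat_n^1 be the set of parking functions p = (p_1,...,p_n) of length n such that p_t ≤ t for all t, and whenever p_i = i for some i, one has p_n < i. Then |PF-hat_n^1| = s(n+1,2), the signless Stirling number of the first kind. -/
/-- `p` is a parking function of length `n`: some nondecreasing rearrangement
`q_1 ≤ ⋯ ≤ q_n` of `p` satisfies `q_j < j` (0-based: `q_i ≤ i`). -/
def IsParkingFn {n : ℕ} (p : Fin n → ℕ) : Prop :=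
  ∃ τ : Equiv.Perm (Fin n), (Monotone fun i => p (τ i)) ∧ ∀ i : Fin n, p (τ i) ≤ (i : ℕ)

/-! ### Auxiliary definitions and lemmas -/

/-- The number of allowed values at position `i` when the last coordinate is `a`. -/
def pfw (a i : ℕ) : ℕ := if a ≤ i then i + 2 else i + 1

lemma pfw_lt (a i : ℕ) : i + 1 ≤ pfw a i ∧ pfw a i ≤ i + 2 ∧ (a ≤ i → pfw a i = i + 2)
    ∧ (¬ a ≤ i → pfw a i = i + 1) := by
  unfold pfw; split <;> simp_all

lemma stirling1_succ_one (n : ℕ) : stirling1 (n + 1) 1 = n.factorial := by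
  induction n with
  | zero => simp [stirling1]
  | succ m ih =>
    show m.succ * stirling1 (m + 1) 1 + stirling1 (m + 1) 0 = _
    rw [ih]
    show (m + 1) * m.factorial + 0 = _
    rw [Nat.factorial_succ]
    ring

lemma sum_prod_pfw (k : ℕ) :
    ∑ a ∈ Finset.range (k + 1), ∏ i ∈ Finset.range k, pfw a i = stirling1 (k + 2) 2 := by
  induction k with
  | zero => simp [stirling1, pfw]
  | succ m ih =>
    rw [Finset.sum_range_succ]
    have h1 : ∏ i ∈ Finset.range (m + 1), pfw (m + 1) i = (m + 1).factorial := by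
      rw [← Finset.prod_range_add_one_eq_factorial]
      apply Finset.prod_congr rfl
      intro i hi
      simp only [Finset.mem_range] at hi
      simp [pfw, Nat.not_le.mpr (by omega : i < m + 1)]
    have h2 : ∀ a ∈ Finset.range (m + 1),
        ∏ i ∈ Finset.range (m + 1), pfw a i = (∏ i ∈ Finset.range m, pfw a i) * (m + 2) := by
      intro a ha
      simp only [Finset.mem_range] at ha
      rw [Finset.prod_range_succ]
      congr 1
      simp [pfw, (by omega : a ≤ m)]
    rw [Finset.sum_congr rfl h2, ← Finset.sum_mul, ih, h1]
    show _ = (m + 2) * stirling1 (m + 2) 2 + stirling1 (m + 2) 1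
    rw [stirling1_succ_one]
    ring

lemma isParkingFn_of (k : ℕ) (p : Fin (k + 1) → ℕ)
    (h1 : ∀ i : Fin (k + 1), p i ≤ (i : ℕ) + 1)
    (h2 : ∀ i : Fin (k + 1), p i = (i : ℕ) + 1 → p (Fin.last k) < (i : ℕ) + 1) :
    IsParkingFn p := by
  refine ⟨Tuple.sort p, Tuple.monotone_sort p, ?_⟩
  intro m
  by_contra hm
  push_neg at hm
  set τ := Tuple.sort p with hτ
  have hmono : Monotone (p ∘ τ) := Tuple.monotone_sort p
  set A : Finset (Fin (k + 1)) := Finset.univ.filter (fun j => p (τ j) ≤ (m : ℕ)) with hA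
  set B : Finset (Fin (k + 1)) := Finset.univ.filter (fun i => p i ≤ (m : ℕ)) with hB
  have hAB : A.card = B.card := by
    apply Finset.card_bij (fun j _ => τ j)
    · intro j hj
      simp only [hA, hB, Finset.mem_filter, Finset.mem_univ, true_and] at hj ⊢
      exact hj
    · intro x _ y _ hxy
      exact τ.injective hxy
    · intro i hi
      refine ⟨τ.symm i, ?_, by simp⟩
      simp only [hA, Finset.mem_filter, Finset.mem_univ, true_and, Equiv.apply_symm_apply]
      simpa [hB] using hi
  have hAcard : A.card ≤ (m : ℕ) := by
    have hsub : A ⊆ Finset.Iio m := by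
      intro j hj
      simp only [hA, Finset.mem_filter, Finset.mem_univ, true_and] at hj
      rw [Finset.mem_Iio]
      by_contra hjm
      push_neg at hjm
      have h' := hmono hjm
      simp only [Function.comp_apply] at h'
      omega
    calc A.card ≤ (Finset.Iio m).card := Finset.card_le_card hsub
      _ = (m : ℕ) := Fin.card_Iio m
  have hBcard : (m : ℕ) + 1 ≤ B.card := by
    by_cases hpm : p m ≤ (m : ℕ)
    · have hsub : Finset.Iic m ⊆ B := by
        intro i hi
        rw [Finset.mem_Iic] at hi
        simp only [hB, Finset.mem_filter, Finset.mem_univ, true_and]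
        rcases eq_or_lt_of_le hi with h | h
        · rw [h]; exact hpm
        · have := h1 i
          have : (i : ℕ) < (m : ℕ) := h
          omega
      calc (m : ℕ) + 1 = (Finset.Iic m).card := (Fin.card_Iic m).symm
        _ ≤ B.card := Finset.card_le_card hsub
    · have hpm' : p m = (m : ℕ) + 1 := by have := h1 m; omega
      have hlast : p (Fin.last k) ≤ (m : ℕ) := by have := h2 m hpm'; omega
      have hnotmem : Fin.last k ∉ Finset.Iio m := by
        simp [Finset.mem_Iio, not_lt, Fin.le_last]
      have hsub : insert (Fin.last k) (Finset.Iio m) ⊆ B := by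
        intro i hi
        simp only [hB, Finset.mem_filter, Finset.mem_univ, true_and]
        rcases Finset.mem_insert.mp hi with h | h
        · rw [h]; exact hlast
        · rw [Finset.mem_Iio] at h
          have := h1 i
          have : (i : ℕ) < (m : ℕ) := h
          omega
      calc (m : ℕ) + 1 = (insert (Fin.last k) (Finset.Iio m)).card := by
            rw [Finset.card_insert_of_notMem hnotmem, Fin.card_Iio]
        _ ≤ B.card := Finset.card_le_card hsub
  omega

/-- The bijection between the set of restricted parking functions and a sigma type. -/
def pfEquiv (k : ℕ) : {p : Fin (k + 1) → ℕ // (∀ i : Fin (k + 1), p i ≤ (i : ℕ) + 1) ∧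
      ∀ i : Fin (k + 1), p i = (i : ℕ) + 1 → p (Fin.last k) < (i : ℕ) + 1} ≃
    Σ a : Fin (k + 1), Π i : Fin k, Fin (pfw (a : ℕ) (i : ℕ)) where
  toFun p := ⟨⟨p.1 (Fin.last k), by
      have h1 := p.2.1 (Fin.last k)
      have h2 := p.2.2 (Fin.last k)
      simp only [Fin.val_last] at h1 h2
      by_cases h : p.1 (Fin.last k) = k + 1
      · have := h2 h; omega
      · omega⟩,
    fun i => ⟨p.1 i.castSucc, by
      have h1 := p.2.1 i.castSucc
      have h2 := p.2.2 i.castSucc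
      simp only [Fin.coe_castSucc] at h1 h2
      show (p.1 i.castSucc) < pfw (p.1 (Fin.last k)) (i : ℕ)
      have hw := pfw_lt (p.1 (Fin.last k)) (i : ℕ)
      by_cases hc : p.1 (Fin.last k) ≤ (i : ℕ)
      · have := hw.2.2.1 hc; omega
      · have := hw.2.2.2 hc
        by_cases hp : p.1 i.castSucc = (i : ℕ) + 1
        · have := h2 hp; omega
        · omega⟩⟩
  invFun x := ⟨fun j => if h : (j : ℕ) < k then ((x.2 ⟨(j : ℕ), h⟩ : ℕ)) else (x.1 : ℕ), by
    constructor
    · intro j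
      dsimp only
      split
      · rename_i h
        have hlt := (x.2 ⟨(j : ℕ), h⟩).isLt
        have hw := pfw_lt (x.1 : ℕ) (((⟨(j : ℕ), h⟩ : Fin k)) : ℕ)
        simp only [Fin.val_mk] at hlt hw
        omega
      · have := x.1.isLt
        have := j.isLt
        omega
    · intro j hj
      dsimp only at hj ⊢
      have hlk : ¬ ((Fin.last k : Fin (k + 1)) : ℕ) < k := by simp
      rw [dif_neg hlk]
      split at hj
      · rename_i h
        have hlt := (x.2 ⟨(j : ℕ), h⟩).isLt
        have hw := pfw_lt (x.1 : ℕ) (((⟨(j : ℕ), h⟩ : Fin k)) : ℕ)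
        simp only [Fin.val_mk] at hlt hw
        rw [hj] at hlt
        by_cases hc : (x.1 : ℕ) ≤ (j : ℕ)
        · omega
        · have := hw.2.2.2 hc; omega
      · have := x.1.isLt
        have := j.isLt
        omega⟩
  left_inv := by
    rintro ⟨p, hp⟩
    apply Subtype.ext
    funext j
    dsimp only
    split
    · rfl
    · rename_i h
      congr 1
      apply Fin.ext
      have := j.isLt
      simp only [Fin.val_last]
      omega
  right_inv := by
    rintro ⟨a, f⟩
    have hlk : ¬ ((Fin.last k : Fin (k + 1)) : ℕ) < k := by simp
    refine Sigma.ext (Fin.ext ?_) (Function.hfunext rfl ?_)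
    · simp
    · intro i i' hii
      have hii' : i = i' := eq_of_heq hii
      subst hii'
      rw [Fin.heq_ext_iff]
      · dsimp only
        rw [dif_pos (by simp)]
        rfl
      · congr 1
        dsimp only
        rw [dif_neg hlk]

lemma card_pf (k : ℕ) :
    Nat.card {p : Fin (k + 1) → ℕ // (∀ i : Fin (k + 1), p i ≤ (i : ℕ) + 1) ∧
      ∀ i : Fin (k + 1), p i = (i : ℕ) + 1 → p (Fin.last k) < (i : ℕ) + 1} =
    ∑ a ∈ Finset.range (k + 1), ∏ i ∈ Finset.range k, pfw a i := by
  rw [Nat.card_congr (pfEquiv k), Nat.card_eq_fintype_card, Fintype.card_sigma]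
  have h : ∀ a : Fin (k + 1), Fintype.card ((i : Fin k) → Fin (pfw (a : ℕ) (i : ℕ)))
      = ∏ i ∈ Finset.range k, pfw (a : ℕ) i := by
    intro a
    rw [Fintype.card_pi]
    simp only [Fintype.card_fin]
    exact Fin.prod_univ_eq_prod_range _ k
  rw [Finset.sum_congr rfl (fun a _ => h a)]
  exact Fin.sum_univ_eq_sum_range (fun a => ∏ i ∈ Finset.range k, pfw a i) (k + 1)

/-- `PF-hat_n^1`, the set of parking functions of length `n` with `p_t ≤ t` for all `t` and
(`p_i = i` ⟹ `p_n < i`), has cardinality `s(n+1, 2)` (1-based indexing; the 0-based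
index `i` corresponds to the 1-based `i+1`, and `p_n` is the last coordinate). -/
theorem card_PFhat1 (n : ℕ) (hn : 1 ≤ n) :
    Set.ncard {p : Fin n → ℕ | IsParkingFn p ∧ (∀ i : Fin n, p i ≤ (i : ℕ) + 1) ∧
      ∀ i : Fin n, p i = (i : ℕ) + 1 → p ⟨n - 1, by omega⟩ < (i : ℕ) + 1} =
    stirling1 (n + 1) 2 := by
  obtain ⟨k, rfl⟩ : ∃ k, n = k + 1 := ⟨n - 1, by omega⟩
  have hset : {p : Fin (k + 1) → ℕ | IsParkingFn p ∧ (∀ i : Fin (k + 1), p i ≤ (i : ℕ) + 1) ∧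
      ∀ i : Fin (k + 1), p i = (i : ℕ) + 1 → p ⟨k + 1 - 1, by omega⟩ < (i : ℕ) + 1} =
      {p : Fin (k + 1) → ℕ | (∀ i : Fin (k + 1), p i ≤ (i : ℕ) + 1) ∧
      ∀ i : Fin (k + 1), p i = (i : ℕ) + 1 → p (Fin.last k) < (i : ℕ) + 1} := by
    ext p
    simp only [Set.mem_setOf_eq]
    constructor
    · rintro ⟨_, hp1, hp2⟩
      exact ⟨hp1, hp2⟩
    · rintro ⟨hp1, hp2⟩
      exact ⟨isParkingFn_of k p hp1 hp2, hp1, hp2⟩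
  rw [hset, ← Nat.card_coe_set_eq]
  have : Nat.card {p : Fin (k + 1) → ℕ | (∀ i : Fin (k + 1), p i ≤ (i : ℕ) + 1) ∧
      ∀ i : Fin (k + 1), p i = (i : ℕ) + 1 → p (Fin.last k) < (i : ℕ) + 1} =
      Nat.card {p : Fin (k + 1) → ℕ // (∀ i : Fin (k + 1), p i ≤ (i : ℕ) + 1) ∧
      ∀ i : Fin (k + 1), p i = (i : ℕ) + 1 → p (Fin.last k) < (i : ℕ) + 1} := rfl
  rw [this, card_pf k, sum_prod_pfw k]
end

section
/- For each 0 ≤ t ≤ n-1, the number of parking functions p = (p_1,...,p_n) of length n with p_n = t, p_i < i for all i ≤ t, and p_j ≤ j for all t < j ≤ n-1, equals n!/(t+1). -/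
/-!
The bounds on the coordinates already force `p` to be a parking function: for every `k` at
least `k + 1` coordinates are `≤ k` (the first `k + 1` when `k < t`, otherwise the first `k`
together with the last one). So the set is the box of functions with `p_n = t`, `p_i` ranging
over `i` values for `i ≤ t` and over `j + 1` values for `t < j ≤ n - 1`, whose size is
`t! · (t + 2) ⋯ n = n! / (t + 1)`.
-/

open Finset Nat

theorem isParkingFn_of_forall_lt_card_filter_le {n : ℕ} (p : Fin n → ℕ)
    (hcount : ∀ k : Fin n, (k : ℕ) < #{j | p j ≤ k}) : IsParkingFn p := by
  refine ⟨Tuple.sort p, Tuple.monotone_sort p, fun i => ?_⟩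
  by_contra! hgt
  have hle : #{j | p j ≤ i} ≤ #(Iio i) := by
    refine card_le_card_of_injOn (Tuple.sort p).symm (fun j hj => ?_)
      (Tuple.sort p).symm.injective.injOn
    simp only [coe_filter, mem_univ, true_and, Set.mem_ofPred_eq] at hj
    have hj' : p (Tuple.sort p ((Tuple.sort p).symm j)) < p (Tuple.sort p i) := by
      simpa using hj.trans_lt hgt
    exact mem_Iio.2 ((Tuple.monotone_sort p).reflect_lt hj')
  have := hcount i
  rw [Fin.card_Iio] at hle
  omega

theorem isParkingFn_of_coord_bounds {m t : ℕ} {p : Fin (m + 1) → ℕ} (hlast : p (Fin.last m) ≤ t)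
    (hlt : ∀ i : Fin (m + 1), (i : ℕ) < t → p i ≤ i)
    (hge : ∀ i : Fin m, t ≤ (i : ℕ) → p i.castSucc ≤ i + 1) : IsParkingFn p := by
  refine isParkingFn_of_forall_lt_card_filter_le p fun k => ?_
  rcases lt_or_ge (k : ℕ) t with hk | hk
  · have hsub : Iic k ⊆ ({j | p j ≤ k} : Finset _) := fun j hj => by
      have hjk : j ≤ k := Finset.mem_Iic.1 hj
      simpa using (hlt j (by omega)).trans (Fin.le_def.1 hjk)
    calc (k : ℕ) < #(Iic k) := by rw [Fin.card_Iic]; omega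
      _ ≤ _ := card_le_card hsub
  · have hnotmem : Fin.last m ∉ Iio k := by simp [Fin.le_last]
    have hsub : insert (Fin.last m) (Iio k) ⊆ ({j | p j ≤ k} : Finset _) := by
      intro j hj
      simp only [mem_filter, mem_univ, true_and]
      rcases mem_insert.1 hj with rfl | hj
      · exact hlast.trans hk
      · have hjk : j < k := mem_Iio.1 hj
        obtain ⟨j, rfl⟩ := Fin.exists_castSucc_eq.2 (hjk.trans_le k.le_last).ne
        rcases lt_or_ge (j : ℕ) t with hjt | hjt
        · exact (hlt _ (by simpa using hjt)).trans (by simpa [Fin.le_def] using hjk.le)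
        · exact (hge j hjt).trans (by rw [Fin.lt_def] at hjk; simpa using hjk)
    calc (k : ℕ) < #(insert (Fin.last m) (Iio k)) := by
          rw [card_insert_of_notMem hnotmem, Fin.card_Iio]; omega
      _ ≤ _ := card_le_card hsub

-- the number of values of the 0-based coordinate `i < n - 1` in the box
def coordBound (t i : ℕ) : ℕ := if i < t then i + 1 else i + 2

theorem succ_mul_prod_coordBound {t m : ℕ} (h : t ≤ m) :
    (t + 1) * ∏ i ∈ range m, coordBound t i = (m + 1)! := by
  induction m, h using Nat.le_induction with
  | base =>
    have hbound : ∀ i ∈ range t, coordBound t i = i + 1 := fun i hi => if_pos (mem_range.1 hi)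
    rw [prod_congr rfl hbound, prod_range_add_one_eq_factorial, factorial_succ]
  | succ m hm ih =>
    rw [prod_range_succ, ← mul_assoc, ih, coordBound, if_neg (by omega), factorial_succ (m + 1)]
    ring

theorem setOf_parking_last_eq_piFinset {m t : ℕ} (ht : t ≤ m) :
    {p : Fin (m + 1) → ℕ | IsParkingFn p ∧ p (Fin.last m) = t ∧
      (∀ i : Fin (m + 1), (i : ℕ) + 1 ≤ t → p i < (i : ℕ) + 1) ∧
      (∀ i : Fin (m + 1), t < (i : ℕ) + 1 → (i : ℕ) + 1 ≤ m → p i ≤ (i : ℕ) + 1)} =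
    Fintype.piFinset (Fin.snoc (α := fun _ => Finset ℕ)
      (fun i : Fin m => range (coordBound t i)) {t}) := by
  ext p
  simp only [Set.mem_ofPred_eq, mem_coe, Fintype.mem_piFinset, Fin.forall_fin_succ',
    Fin.snoc_castSucc, Fin.snoc_last, mem_range, mem_singleton, coordBound, Fin.val_castSucc,
    Fin.val_last]
  constructor
  · rintro ⟨-, hlast, ⟨hlt, -⟩, hge, -⟩
    refine ⟨fun i => ?_, hlast⟩
    split_ifs with hit
    · exact hlt i hit
    · exact Nat.lt_succ_of_le (hge i (by omega) i.isLt)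
  · rintro ⟨hbox, hlast⟩
    have hlt : ∀ i : Fin m, (i : ℕ) < t → p i.castSucc ≤ i := fun i hit => by
      simpa [hit, Nat.lt_succ_iff] using hbox i
    have hge : ∀ i : Fin m, t ≤ (i : ℕ) → p i.castSucc ≤ i + 1 := fun i hit => by
      simpa [hit.not_gt, Nat.lt_succ_iff] using hbox i
    have hpark : IsParkingFn p := isParkingFn_of_coord_bounds hlast.le
      (Fin.forall_fin_succ'.2 ⟨by simpa using hlt, fun h => by simp at h; omega⟩) hge
    exact ⟨hpark, hlast, ⟨fun i hi => Nat.lt_succ_of_le (hlt i hi), by omega⟩,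
      fun i hi _ => hge i (by omega), by omega⟩

/-- For `0 ≤ t ≤ n-1`, the number of parking functions `p` of length `n` with `p_n = t`,
`p_i < i` for all `i ≤ t` and `p_j ≤ j` for all `t < j ≤ n-1`, equals `n!/(t+1)`
(1-based indexing; 0-based index `i` corresponds to 1-based `i+1`). -/
theorem card_parking_with_last_coord (n t : ℕ) (hn : 1 ≤ n) (ht : t ≤ n - 1) :
    Set.ncard {p : Fin n → ℕ | IsParkingFn p ∧ p ⟨n - 1, by omega⟩ = t ∧
      (∀ i : Fin n, (i : ℕ) + 1 ≤ t → p i < (i : ℕ) + 1) ∧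
      (∀ i : Fin n, t < (i : ℕ) + 1 → (i : ℕ) + 1 ≤ n - 1 → p i ≤ (i : ℕ) + 1)} =
    n.factorial / (t + 1) := by
  obtain ⟨m, rfl⟩ : ∃ m, n = m + 1 := ⟨n - 1, by omega⟩
  simp only [Nat.add_sub_cancel] at ht ⊢
  rw [← Fin.last, setOf_parking_last_eq_piFinset ht, Set.ncard_coe_finset, Fintype.card_piFinset,
    Fin.prod_univ_castSucc]
  simp only [Fin.snoc_castSucc, Fin.snoc_last, card_range, card_singleton, mul_one]
  rw [Fin.prod_univ_eq_prod_range (fun i => coordBound t i), ← succ_mul_prod_coordBound ht,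
    Nat.mul_div_cancel_left _ t.succ_pos]
end

section
/- For 1 ≤ r ≤ n-1, the number of strict chains of length r (i.e., with r+1 elements) in the poset Σ_n(T_1) equals C(n, r+1) + (r+1)·C(n-1, r+1) + r·C(n-1, r). -/
/-- Elements of the poset `Σ_n(T_1)`, encoded as pairs `(flag, label)`:
`(false, ℓ)` is the singleton `{ℓ}` with `1 ≤ ℓ ≤ n-1`, and `(true, i)` is the
set `{i, n}` with `1 ≤ i ≤ n` (where `{n, n} = {n}`). -/
def MemSigmaT1 (n : ℕ) (x : Bool × ℕ) : Prop :=
  (x.1 = false ∧ 1 ≤ x.2 ∧ x.2 ≤ n - 1) ∨ (x.1 = true ∧ 1 ≤ x.2 ∧ x.2 ≤ n)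

/-- The strict order of `Σ_n(T_1)`, the transitive closure of the cover relations:
`{ℓ}` covers `{ℓ+1}`, `{i,n}` covers `{i}`, and `{i,n}` covers `{i+1,n}`.
Thus `{a} < {b}` iff `b < a`; `{a,n} < {b,n}` iff `b < a`; `{a} < {b,n}` iff `b ≤ a`;
and no pair `{a,n}` is below a singleton. -/
def LtSigmaT1 (x y : Bool × ℕ) : Prop :=
  if x.1 = false ∧ y.1 = false then y.2 < x.2
  else if x.1 = true ∧ y.1 = true then y.2 < x.2
  else if x.1 = false ∧ y.1 = true then y.2 ≤ x.2
  else False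

lemma boolMono {m : ℕ} {c : Fin m → Bool × ℕ}
    (hc : ∀ k l : Fin m, k < l → LtSigmaT1 (c k) (c l)) {k l : Fin m} (hkl : k ≤ l)
    (hk : (c k).1 = true) : (c l).1 = true := by
  rcases eq_or_lt_of_le hkl with rfl | h
  · exact hk
  · have h2 := hc k l h
    by_contra hl
    simp only [Bool.not_eq_true] at hl
    simp [LtSigmaT1, hk, hl] at h2

lemma falseCount {m : ℕ} {c : Fin m → Bool × ℕ}
    (hc : ∀ k l : Fin m, k < l → LtSigmaT1 (c k) (c l)) (k : Fin m) :
    (c k).1 = false ↔ (k : ℕ) < (Finset.univ.filter fun k => (c k).1 = false).card := by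
  constructor
  · intro hk
    have hsub : Finset.Iic k ⊆ Finset.univ.filter fun k => (c k).1 = false := by
      intro l hl
      simp only [Finset.mem_Iic] at hl
      simp only [Finset.mem_filter, Finset.mem_univ, true_and]
      by_contra h
      simp only [Bool.not_eq_false] at h
      have := boolMono hc hl h
      simp [this] at hk
    have := Finset.card_le_card hsub
    rw [Fin.card_Iic] at this
    omega
  · intro hk
    by_contra h
    simp only [Bool.not_eq_false] at h
    have hsub : (Finset.univ.filter fun k => (c k).1 = false) ⊆ Finset.Iio k := by
      intro l hl
      simp only [Finset.mem_filter, Finset.mem_univ, true_and] at hl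
      simp only [Finset.mem_Iio]
      by_contra hkl
      have := boolMono hc (le_of_not_gt hkl) h
      simp [this] at hl
    have := Finset.card_le_card hsub
    rw [Fin.card_Iio] at this
    omega

lemma yStrict {m : ℕ} {c : Fin m → Bool × ℕ}
    (hc : ∀ k l : Fin m, k < l → LtSigmaT1 (c k) (c l)) {k l : Fin m} (h : k < l) :
    (c l).2 + (if (c l).1 = false then 1 else 0) <
      (c k).2 + (if (c k).1 = false then 1 else 0) := by
  have h2 := hc k l h
  rcases hk : (c k).1 <;> rcases hl : (c l).1 <;>
    simp [LtSigmaT1, hk, hl] at h2 ⊢ <;> omega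

lemma yInj {m : ℕ} {c : Fin m → Bool × ℕ}
    (hc : ∀ k l : Fin m, k < l → LtSigmaT1 (c k) (c l)) :
    Function.Injective (fun k : Fin m => (c k).2 + if (c k).1 = false then 1 else 0) := by
  intro a b hab
  rcases lt_trichotomy a b with h | h | h
  · exact absurd hab (Nat.ne_of_gt (yStrict hc h))
  · exact h
  · exact absurd hab (Nat.ne_of_lt (yStrict hc h))

/-- For `1 ≤ r ≤ n-1`, the number of strict chains with `r+1` elements in the poset
`Σ_n(T_1)` (counted as strictly increasing `(r+1)`-tuples) equals
`C(n, r+1) + (r+1)·C(n-1, r+1) + r·C(n-1, r)`. -/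
theorem card_chains_SigmaT1 (n r : ℕ) (hr1 : 1 ≤ r) (hr2 : r ≤ n - 1) :
    Set.ncard {c : Fin (r + 1) → Bool × ℕ |
      (∀ k, MemSigmaT1 n (c k)) ∧ ∀ k l : Fin (r + 1), k < l → LtSigmaT1 (c k) (c l)} =
    n.choose (r + 1) + (r + 1) * (n - 1).choose (r + 1) + r * (n - 1).choose r := by
  classical
  have hn : 2 ≤ n := by omega
  set Sc : Set (Fin (r + 1) → Bool × ℕ) := {c : Fin (r + 1) → Bool × ℕ |
      (∀ k, MemSigmaT1 n (c k)) ∧ ∀ k l : Fin (r + 1), k < l → LtSigmaT1 (c k) (c l)} with hSc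
  set F : (Fin (r + 1) → Bool × ℕ) → ℕ × Finset ℕ := fun c =>
    ((Finset.univ.filter fun k => (c k).1 = false).card,
     Finset.image (fun k => (c k).2 + if (c k).1 = false then 1 else 0) Finset.univ) with hF
  set T : Finset (ℕ × Finset ℕ) :=
    (Finset.range (r + 1) ×ˢ Finset.powersetCard (r + 1) (Finset.Icc 1 n)) ∪
    (({r + 1} : Finset ℕ) ×ˢ Finset.powersetCard (r + 1) (Finset.Icc 2 n)) with hT
  -- maps to
  have hmaps : ∀ c ∈ Sc, F c ∈ T := by
    rintro c ⟨hmem, hchain⟩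
    have hjle : (Finset.univ.filter fun k => (c k).1 = false).card ≤ r + 1 := by
      refine le_trans (Finset.card_filter_le _ _) ?_
      simp
    have hcardim :
        (Finset.image (fun k => (c k).2 + if (c k).1 = false then 1 else 0) Finset.univ).card
          = r + 1 := by
      rw [Finset.card_image_of_injective _ (yInj hchain), Finset.card_univ, Fintype.card_fin]
    have hsub1 :
        (Finset.image (fun k => (c k).2 + if (c k).1 = false then 1 else 0) Finset.univ)
          ⊆ Finset.Icc 1 n := by
      refine Finset.image_subset_iff.mpr fun k _ => ?_
      rcases hmem k with ⟨h1, h2, h3⟩ | ⟨h1, h2, h3⟩ <;>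
        simp only [h1, if_pos, if_neg, Finset.mem_Icc] <;> simp <;> omega
    by_cases hcase : (Finset.univ.filter fun k => (c k).1 = false).card = r + 1
    · refine Finset.mem_union_right _ (Finset.mem_product.mpr ⟨?_, ?_⟩)
      · simp [hF, hcase]
      · simp only [hF]
        refine Finset.mem_powersetCard.mpr ⟨?_, hcardim⟩
        refine Finset.image_subset_iff.mpr fun k _ => ?_
        have hkf : (c k).1 = false := (falseCount hchain k).mpr (by rw [hcase]; exact k.isLt)
        rcases hmem k with ⟨h1, h2, h3⟩ | ⟨h1, h2, h3⟩
        · simp only [h1, if_pos, Finset.mem_Icc]; constructor <;> omega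
        · rw [h1] at hkf; exact absurd hkf (by simp)
    · exact Finset.mem_union_left _ (Finset.mem_product.mpr ⟨by
        simp only [hF, Finset.mem_range]; omega,
        by simp only [hF]; exact Finset.mem_powersetCard.mpr ⟨hsub1, hcardim⟩⟩)
  -- injective on
  have hinjOn : Set.InjOn F Sc := by
    rintro c ⟨hmem, hchain⟩ c' ⟨hmem', hchain'⟩ heq
    have hj : (Finset.univ.filter fun k => (c k).1 = false).card
        = (Finset.univ.filter fun k => (c' k).1 = false).card := congrArg Prod.fst heq
    have himg : Finset.image (fun k => (c k).2 + if (c k).1 = false then 1 else 0) Finset.univ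
        = Finset.image (fun k => (c' k).2 + if (c' k).1 = false then 1 else 0) Finset.univ :=
      congrArg Prod.snd heq
    have hbool : ∀ k, (c k).1 = (c' k).1 := by
      intro k
      have hiff : ((c k).1 = false) ↔ ((c' k).1 = false) := by
        rw [falseCount hchain k, falseCount hchain' k, hj]
      cases hck : (c k).1 <;> cases hck' : (c' k).1 <;> simp [hck, hck'] at hiff ⊢
    have hcard : (Finset.image (fun k => (c' k).2 + if (c' k).1 = false then 1 else 0)
        Finset.univ).card = r + 1 := by
      rw [Finset.card_image_of_injective _ (yInj hchain'), Finset.card_univ,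
        Fintype.card_fin]
    have hsm : StrictMono (fun k : Fin (r + 1) =>
        (c k.rev).2 + if (c k.rev).1 = false then 1 else 0) := by
      intro a b hab
      exact yStrict hchain (Fin.rev_lt_rev.mpr hab)
    have hsm' : StrictMono (fun k : Fin (r + 1) =>
        (c' k.rev).2 + if (c' k.rev).1 = false then 1 else 0) := by
      intro a b hab
      exact yStrict hchain' (Fin.rev_lt_rev.mpr hab)
    have hfs : ∀ x : Fin (r + 1),
        ((c x.rev).2 + (if (c x.rev).1 = false then 1 else 0)) ∈
          Finset.image (fun k => (c' k).2 + if (c' k).1 = false then 1 else 0) Finset.univ := by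
      intro x; rw [← himg]; exact Finset.mem_image_of_mem _ (Finset.mem_univ _)
    have hfs' : ∀ x : Fin (r + 1),
        ((c' x.rev).2 + (if (c' x.rev).1 = false then 1 else 0)) ∈
          Finset.image (fun k => (c' k).2 + if (c' k).1 = false then 1 else 0) Finset.univ := by
      intro x; exact Finset.mem_image_of_mem _ (Finset.mem_univ _)
    have e1 := Finset.orderEmbOfFin_unique hcard hfs hsm
    have e2 := Finset.orderEmbOfFin_unique hcard hfs' hsm'
    have hyeq : ∀ k : Fin (r + 1),
        (c k).2 + (if (c k).1 = false then 1 else 0)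
          = (c' k).2 + (if (c' k).1 = false then 1 else 0) := by
      intro k
      have h1 := congrFun e1 k.rev
      have h2 := congrFun e2 k.rev
      simp only [Fin.rev_rev] at h1 h2
      rw [h1, h2]
    funext k
    have hb := hbool k
    have hy := hyeq k
    rw [hb] at hy
    exact Prod.ext hb (by omega)
  -- surjective onto
  have hsurj : ∀ p ∈ T, ∃ c ∈ Sc, F c = p := by
    rintro ⟨j, S⟩ hp
    simp only [hT, Finset.mem_union, Finset.mem_product, Finset.mem_range,
      Finset.mem_singleton, Finset.mem_powersetCard] at hp
    obtain ⟨hjle, hScard, hSsub, hS2⟩ :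
        j ≤ r + 1 ∧ S.card = r + 1 ∧ S ⊆ Finset.Icc 1 n ∧
          (j = r + 1 → S ⊆ Finset.Icc 2 n) := by
      rcases hp with ⟨h1, h2, h3⟩ | ⟨h1, h2, h3⟩
      · exact ⟨by omega, h3, h2, fun h => absurd h (by omega)⟩
      · refine ⟨by omega, h3, fun x hx => ?_, fun _ => h2⟩
        have := Finset.mem_Icc.mp (h2 hx)
        exact Finset.mem_Icc.mpr ⟨by omega, this.2⟩
    set e := S.orderEmbOfFin hScard with he
    set y : Fin (r + 1) → ℕ := fun k => e k.rev with hy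
    have hyanti : ∀ {k l : Fin (r + 1)}, k < l → y l < y k := by
      intro k l h
      exact e.strictMono (Fin.rev_lt_rev.mpr h)
    have hymem : ∀ k, y k ∈ S := fun k => Finset.orderEmbOfFin_mem S hScard k.rev
    have hy1n : ∀ k, 1 ≤ y k ∧ y k ≤ n := fun k => Finset.mem_Icc.mp (hSsub (hymem k))
    have hy2 : ∀ k : Fin (r + 1), (k : ℕ) < j → 2 ≤ y k := by
      intro k hk
      by_cases hcase : j = r + 1
      · exact (Finset.mem_Icc.mp (hS2 hcase (hymem k))).1
      · have hlt : k < (⟨r, by omega⟩ : Fin (r + 1)) := by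
          rw [Fin.lt_def]; simp; omega
        have h1 := hyanti hlt
        have h2 := (hy1n ⟨r, by omega⟩).1
        omega
    set c : Fin (r + 1) → Bool × ℕ :=
      fun k => if (k : ℕ) < j then (false, y k - 1) else (true, y k) with hc
    have hcval : ∀ k : Fin (r + 1),
        (c k).2 + (if (c k).1 = false then 1 else 0) = y k := by
      intro k
      by_cases h : (k : ℕ) < j
      · have := hy2 k h; simp only [hc, if_pos h]; simp; omega
      · simp only [hc, if_neg h]; simp
    refine ⟨c, ⟨?_, ?_⟩, ?_⟩
    · intro k
      by_cases h : (k : ℕ) < j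
      · have h2 := hy2 k h
        have h3 := hy1n k
        refine Or.inl ?_
        simp only [hc]
        rw [if_pos h]
        exact ⟨rfl, by omega, by omega⟩
      · have h3 := hy1n k
        refine Or.inr ?_
        simp only [hc]
        rw [if_neg h]
        exact ⟨rfl, h3.1, h3.2⟩
    · intro k l hkl
      have hkl' : (k : ℕ) < (l : ℕ) := hkl
      have hylt := hyanti hkl
      by_cases h1 : (k : ℕ) < j <;> by_cases h2 : (l : ℕ) < j
      · have := hy2 l h2
        simp only [hc, if_pos h1, if_pos h2, LtSigmaT1]
        simp; omega
      · simp only [hc, if_pos h1, if_neg h2, LtSigmaT1]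
        simp; omega
      · omega
      · simp only [hc, if_neg h1, if_neg h2, LtSigmaT1]
        simp; omega
    · have hbool : ∀ k : Fin (r + 1), ((c k).1 = false) ↔ (k : ℕ) < j := by
        intro k
        by_cases h : (k : ℕ) < j <;> simp [hc, h]
      have hcnt : (Finset.univ.filter fun k => (c k).1 = false).card = j := by
        have hfe : (Finset.univ.filter fun k => (c k).1 = false)
            = Finset.univ.filter fun k : Fin (r + 1) => (k : ℕ) < j := by
          apply Finset.filter_congr
          intro k _
          exact (by rw [hbool k] : ((c k).1 = false) ↔ _)
        rw [hfe]
        by_cases hcase : j = r + 1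
        · subst hcase
          rw [Finset.filter_true_of_mem fun k _ => k.isLt, Finset.card_univ, Fintype.card_fin]
        · have : (Finset.univ.filter fun k : Fin (r + 1) => (k : ℕ) < j)
              = Finset.Iio (⟨j, by omega⟩ : Fin (r + 1)) := by
            ext k
            simp [Finset.mem_Iio, Fin.lt_def]
          rw [this, Fin.card_Iio]
      have himg : Finset.image (fun k => (c k).2 + if (c k).1 = false then 1 else 0)
          Finset.univ = S := by
        rw [show (fun k => (c k).2 + if (c k).1 = false then 1 else 0) = y from funext hcval]
        apply Finset.coe_injective
        rw [Finset.coe_image, Finset.coe_univ, Set.image_univ]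
        have hrange : Set.range y = Set.range e := by
          ext a
          constructor
          · rintro ⟨k, rfl⟩; exact ⟨k.rev, rfl⟩
          · rintro ⟨k, rfl⟩; exact ⟨k.rev, by simp [hy, Fin.rev_rev]⟩
        rw [hrange, Finset.range_orderEmbOfFin]
      simp only [hF]
      exact Prod.ext hcnt himg
  -- put it together
  have hbij : Set.BijOn F Sc ↑T := by
    refine ⟨fun c hc => hmaps c hc, hinjOn, fun p hp => ?_⟩
    obtain ⟨c, hc, hFc⟩ := hsurj p hp
    exact ⟨c, hc, hFc⟩
  have hcardT : Sc.ncard = T.card := by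
    calc Sc.ncard = (F '' Sc).ncard := (Set.ncard_image_of_injOn hinjOn).symm
      _ = (↑T : Set (ℕ × Finset ℕ)).ncard := by rw [hbij.image_eq]
      _ = T.card := Set.ncard_coe_finset T
  rw [hcardT]
  have hdisj : Disjoint
      (Finset.range (r + 1) ×ˢ Finset.powersetCard (r + 1) (Finset.Icc 1 n))
      (({r + 1} : Finset ℕ) ×ˢ Finset.powersetCard (r + 1) (Finset.Icc 2 n)) := by
    rw [Finset.disjoint_left]
    rintro ⟨a, b⟩ h1 h2
    simp only [Finset.mem_product, Finset.mem_range, Finset.mem_singleton] at h1 h2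
    omega
  rw [hT, Finset.card_union_of_disjoint hdisj, Finset.card_product, Finset.card_product,
    Finset.card_range, Finset.card_singleton, Finset.card_powersetCard,
    Finset.card_powersetCard, Nat.card_Icc, Nat.card_Icc]
  obtain ⟨m, rfl⟩ : ∃ m, n = m + 1 := ⟨n - 1, by omega⟩
  have h1 : m + 1 + 1 - 1 = m + 1 := by omega
  have h2 : m + 1 + 1 - 2 = m := by omega
  have h3 : m + 1 - 1 = m := by omega
  rw [h1, h2, h3, Nat.choose_succ_succ]
  ring
end
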